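/- arXiv:1105.2911 — 2 statements merged into one kernel-verified Lean document; each statement's English description precedes it below -/
import Mathlib

section
/- Consider the multivariate linear model Y = X·B + E, where X is a real N×p matrix with XᵀX invertible, B is a deterministic real p×r matrix, and E : Ω → (N×r real matrices) is a random matrix with square-integrable entries, entrywise mean zero, and second moments E(E_{ik} E_{jl}) = δ_{ij} Σ_{kl} for a fixed real r×r matrix Σ. Then, with H = X(XᵀX)⁻¹Xᵀ, the entrywise expectation of Yᵀ(I_N − H)Y equals (N − p) · Σ; in particular, if N > p then Σ̂ = Yᵀ(I_N − H)Y/(N − p) is an unbiased estimator of Σ. -/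
open Matrix MeasureTheory

/-
The residual maker `M = I - H` annihilates the column space of `X` from both sides, so
`YᵀMY = EᵀME`. Taking expectations entrywise, `E[(EᵀME)_{ab}] = ∑_{i,j} M_{ij} E[E_{ia}E_{jb}]
= trace M · Σ_{ab}`, and `trace H = trace((XᵀX)⁻¹XᵀX) = p`, so `trace M = N - p`.
-/

namespace Matrix

variable {m n R : Type*} [Fintype m] [Fintype n] [DecidableEq n] [CommRing R]

noncomputable def hatMatrix (X : Matrix m n R) : Matrix m m R := X * (Xᵀ * X)⁻¹ * Xᵀ

variable (X : Matrix m n R) [Invertible (Xᵀ * X)]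

theorem hatMatrix_mul_self : hatMatrix X * X = X := by
  rw [hatMatrix, Matrix.mul_assoc, Matrix.mul_assoc, inv_mul_of_invertible, Matrix.mul_one]

theorem transpose_mul_hatMatrix : Xᵀ * hatMatrix X = Xᵀ := by
  rw [hatMatrix, ← Matrix.mul_assoc, ← Matrix.mul_assoc, mul_inv_of_invertible, Matrix.one_mul]

theorem one_sub_hatMatrix_mul_self [DecidableEq m] : (1 - hatMatrix X) * X = 0 := by
  rw [Matrix.sub_mul, Matrix.one_mul, hatMatrix_mul_self, sub_self]

theorem transpose_mul_one_sub_hatMatrix [DecidableEq m] : Xᵀ * (1 - hatMatrix X) = 0 := by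
  rw [Matrix.mul_sub, Matrix.mul_one, transpose_mul_hatMatrix, sub_self]

theorem trace_hatMatrix : trace (hatMatrix X) = (Fintype.card n : R) := by
  rw [hatMatrix, Matrix.mul_assoc, trace_mul_comm, Matrix.mul_assoc, inv_mul_of_invertible,
    trace_one]

theorem trace_one_sub_hatMatrix [DecidableEq m] :
    trace (1 - hatMatrix X : Matrix m m R) = Fintype.card m - Fintype.card n := by
  rw [trace_sub, trace_one, trace_hatMatrix]

end Matrix

theorem Matrix.transpose_mul_mul_add_of_annihilates {m n r R : Type*} [Fintype m] [Fintype n]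
    [CommRing R] {M : Matrix m m R} {X : Matrix m n R} (hMX : M * X = 0) (hXM : Xᵀ * M = 0)
    (B : Matrix n r R) (E : Matrix m r R) :
    (X * B + E)ᵀ * M * (X * B + E) = Eᵀ * M * E := by
  have hright : M * (X * B + E) = M * E := by
    rw [Matrix.mul_add, ← Matrix.mul_assoc, hMX, Matrix.zero_mul, zero_add]
  have hleft : (X * B + E)ᵀ * M = Eᵀ * M := by
    rw [transpose_add, transpose_mul, Matrix.add_mul, Matrix.mul_assoc, hXM, Matrix.mul_zero,
      zero_add]
  rw [hleft, Matrix.mul_assoc, hright, ← Matrix.mul_assoc]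

theorem integral_transpose_mul_mul_apply {Ω n r : Type*} [MeasurableSpace Ω] {μ : Measure Ω}
    [Fintype n] [DecidableEq n] {E : Ω → Matrix n r ℝ} {S : Matrix r r ℝ}
    (hL2 : ∀ i k, MemLp (fun ω => E ω i k) 2 μ)
    (hCov : ∀ i j k l, (∫ ω, E ω i k * E ω j l ∂μ) = (if i = j then (1 : ℝ) else 0) * S k l)
    (M : Matrix n n ℝ) (a b : r) :
    ∫ ω, ((E ω)ᵀ * M * E ω) a b ∂μ = trace M * S a b := by
  have hint : ∀ i j, Integrable (fun ω => E ω i a * E ω j b) μ :=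
    fun i j => (hL2 i a).integrable_mul (hL2 j b)
  calc ∫ ω, ((E ω)ᵀ * M * E ω) a b ∂μ
      = ∫ ω, ∑ j, ∑ i, M i j * (E ω i a * E ω j b) ∂μ := by
        congr 1; funext ω
        simp only [mul_apply, transpose_apply, Finset.sum_mul]
        exact Finset.sum_congr rfl fun j _ => Finset.sum_congr rfl fun i _ => by ring
    _ = ∑ j, ∑ i, M i j * ((if i = j then (1 : ℝ) else 0) * S a b) := by
        rw [integral_finsetSum _ fun j _ => integrable_finsetSum _ fun i _ =>
          (hint i j).const_mul _]
        refine Finset.sum_congr rfl fun j _ => ?_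
        rw [integral_finsetSum _ fun i _ => (hint i j).const_mul _]
        exact Finset.sum_congr rfl fun i _ => by rw [integral_const_mul, hCov]
    _ = trace M * S a b := by
        simp [trace, Finset.sum_mul]

theorem residual_covariance_unbiased_general {Ω : Type*} [MeasureSpace Ω]
    (N p r : ℕ) (X : Matrix (Fin N) (Fin p) ℝ) (hX : Invertible (Xᵀ * X))
    (B : Matrix (Fin p) (Fin r) ℝ) (S : Matrix (Fin r) (Fin r) ℝ)
    (Err : Ω → Matrix (Fin N) (Fin r) ℝ)
    (hL2 : ∀ i k, MemLp (fun ω => Err ω i k) 2)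
    (hCov : ∀ i j k l, (∫ ω, Err ω i k * Err ω j l) =
      (if i = j then (1 : ℝ) else 0) * S k l)
    (Y : Ω → Matrix (Fin N) (Fin r) ℝ) (hY : ∀ ω, Y ω = X * B + Err ω)
    (H : Matrix (Fin N) (Fin N) ℝ) (hH : H = X * (Xᵀ * X)⁻¹ * Xᵀ) :
    (∀ a b, (∫ ω, ((Y ω)ᵀ * ((1 : Matrix (Fin N) (Fin N) ℝ) - H) * Y ω) a b) =
      ((N : ℝ) - (p : ℝ)) * S a b) ∧
    (N > p → ∀ a b,
      (∫ ω, (((N : ℝ) - (p : ℝ))⁻¹ • ((Y ω)ᵀ * ((1 : Matrix (Fin N) (Fin N) ℝ) - H) * Y ω)) a b)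
        = S a b) := by
  change H = hatMatrix X at hH
  have hExpect : ∀ a b, (∫ ω, ((Y ω)ᵀ * (1 - H : Matrix (Fin N) (Fin N) ℝ) * Y ω) a b) =
      ((N : ℝ) - p) * S a b := by
    intro a b
    simp_rw [hY, hH, transpose_mul_mul_add_of_annihilates (one_sub_hatMatrix_mul_self X)
      (transpose_mul_one_sub_hatMatrix X)]
    rw [integral_transpose_mul_mul_apply hL2 hCov, trace_one_sub_hatMatrix, Fintype.card_fin,
      Fintype.card_fin]
  refine ⟨hExpect, fun hNp a b => ?_⟩
  have hNp' : ((N : ℝ) - p) ≠ 0 := sub_ne_zero.2 (Nat.cast_injective.ne hNp.ne')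
  simp_rw [Matrix.smul_apply, smul_eq_mul]
  rw [integral_const_mul, hExpect, inv_mul_cancel_left₀ hNp']

/-- In the multivariate linear model `Y = X B + E` with `XᵀX` invertible, where the random error
matrix `E` has square-integrable entries, entrywise mean zero, and second moments
`E(E_{ik} E_{jl}) = δ_{ij} Σ_{kl}`, the entrywise expectation of `Yᵀ (I_N - H) Y`, with
`H = X (XᵀX)⁻¹ Xᵀ`, equals `(N - p) • Σ`; in particular, if `N > p` then
`Σ̂ = Yᵀ (I_N - H) Y / (N - p)` is an unbiased estimator of `Σ`. -/
theorem residual_covariance_unbiased {Ω : Type*} [MeasureSpace Ω]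
    [IsProbabilityMeasure (volume : Measure Ω)]
    (N p r : ℕ) (X : Matrix (Fin N) (Fin p) ℝ) (hX : Invertible (Xᵀ * X))
    (B : Matrix (Fin p) (Fin r) ℝ) (S : Matrix (Fin r) (Fin r) ℝ)
    (Err : Ω → Matrix (Fin N) (Fin r) ℝ)
    (hL2 : ∀ i k, MemLp (fun ω => Err ω i k) 2)
    (hMean : ∀ i k, (∫ ω, Err ω i k) = 0)
    (hCov : ∀ i j k l, (∫ ω, Err ω i k * Err ω j l) =
      (if i = j then (1 : ℝ) else 0) * S k l)
    (Y : Ω → Matrix (Fin N) (Fin r) ℝ) (hY : ∀ ω, Y ω = X * B + Err ω)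
    (H : Matrix (Fin N) (Fin N) ℝ) (hH : H = X * (Xᵀ * X)⁻¹ * Xᵀ) :
    (∀ a b, (∫ ω, ((Y ω)ᵀ * ((1 : Matrix (Fin N) (Fin N) ℝ) - H) * Y ω) a b) =
      ((N : ℝ) - (p : ℝ)) * S a b) ∧
    (N > p → ∀ a b,
      (∫ ω, (((N : ℝ) - (p : ℝ))⁻¹ • ((Y ω)ᵀ * ((1 : Matrix (Fin N) (Fin N) ℝ) - H) * Y ω)) a b)
        = S a b) :=
  residual_covariance_unbiased_general N p r X hX B S Err hL2 hCov Y hY H hH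
end

section
/- The cumulative distribution function of the standard Gaussian measure, cdf(gaussianReal 0 1), is strictly monotone increasing on ℝ. Consequently, for functions μ : ℝⁿ → ℝ and s : ℝⁿ → ℝ with s(x) > 0 for all x, a fixed target τ ∈ ℝ, a set 𝔛 ⊆ ℝⁿ, and x* ∈ 𝔛: x* minimizes x ↦ cdf(gaussianReal (μ x) (s x)²)(τ) over 𝔛 if and only if x* minimizes x ↦ (τ − μ(x))/s(x) over 𝔛. (This is the equivalence between the multiobjective minimum-risk P-model and its deterministic equivalent program.) -/
/-!
The cdf of a probability measure charging every nondegenerate interval is strictly increasing,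
and `gaussianReal m σ²` is the image of the standard Gaussian under `x ↦ σ x + m`, so its cdf at
`τ` is the standard cdf at the z-score `(τ - m) / σ`. Minimizing the probability is therefore
minimizing the z-score.
-/

open MeasureTheory ProbabilityTheory Set

namespace ProbabilityTheory

lemma strictMono_cdf_of_absolutelyContinuous {μ : Measure ℝ} [IsProbabilityMeasure μ]
    (h : volume ≪ μ) : StrictMono (cdf μ) := by
  intro a b hab
  have hIoc : μ (Ioc a b) ≠ 0 := fun h0 => by
    have := h h0
    simp only [Real.volume_Ioc, ENNReal.ofReal_eq_zero, sub_nonpos] at this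
    exact this.not_gt hab
  rw [← measure_cdf μ, StieltjesFunction.measure_Ioc, ne_eq, ENNReal.ofReal_eq_zero,
    sub_nonpos, not_le] at hIoc
  exact hIoc

lemma strictMono_cdf_gaussianReal (m : ℝ) {v : NNReal} (hv : v ≠ 0) :
    StrictMono (cdf (gaussianReal m v)) :=
  strictMono_cdf_of_absolutelyContinuous (gaussianReal_absolutelyContinuous' m hv)

lemma cdf_map_apply_of_strictMono {μ : Measure ℝ} [IsProbabilityMeasure μ] {f : ℝ → ℝ}
    (hf : StrictMono f) (y : ℝ) : cdf (μ.map f) (f y) = cdf μ y := by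
  have hf_meas : Measurable f := hf.monotone.measurable
  have : IsProbabilityMeasure (μ.map f) := Measure.isProbabilityMeasure_map hf_meas.aemeasurable
  have hpre : f ⁻¹' Iic (f y) = Iic y := by
    ext x
    exact hf.le_iff_le
  rw [cdf_eq_real, cdf_eq_real, map_measureReal_apply hf_meas measurableSet_Iic, hpre]

lemma gaussianReal_zero_one_map_mul_add_const {σ : ℝ} (hσ : 0 ≤ σ) (m : ℝ) :
    (gaussianReal 0 1).map (fun x => σ * x + m) = gaussianReal m (σ.toNNReal ^ 2) := by
  have hcomp : (fun x => σ * x + m) = (· + m) ∘ (σ * ·) := rfl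
  rw [hcomp, ← Measure.map_map (measurable_add_const m) (measurable_const_mul σ),
    gaussianReal_map_const_mul, gaussianReal_map_add_const, mul_zero, zero_add, mul_one]
  congr 1
  ext
  simp [Real.coe_toNNReal σ hσ]

lemma cdf_gaussianReal_eq_cdf_zero_one (m τ : ℝ) {σ : ℝ} (hσ : 0 < σ) :
    cdf (gaussianReal m (σ.toNNReal ^ 2)) τ = cdf (gaussianReal 0 1) ((τ - m) / σ) := by
  have hf : StrictMono fun x => σ * x + m := fun x y hxy => by dsimp only; gcongr
  have hτ : τ = σ * ((τ - m) / σ) + m := by field_simp; ring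
  rw [← gaussianReal_zero_one_map_mul_add_const hσ.le, hτ, cdf_map_apply_of_strictMono hf, ← hτ]

end ProbabilityTheory

/-- The standard Gaussian cdf is strictly monotone; consequently, for `μ, s : ℝⁿ → ℝ` with
`s x > 0`, a target `τ ∈ ℝ`, and `x⋆ ∈ 𝔛 ⊆ ℝⁿ`, the point `x⋆` minimizes
`x ↦ cdf (gaussianReal (μ x) (s x)²) τ` over `𝔛` if and only if it minimizes
`x ↦ (τ - μ x) / s x` over `𝔛`. -/
theorem gaussian_cdf_min_iff {n : ℕ} :
    StrictMono (fun t : ℝ => cdf (gaussianReal 0 1) t) ∧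
    ∀ (μ s : (Fin n → ℝ) → ℝ), (∀ x, 0 < s x) → ∀ (τ : ℝ) (𝔛 : Set (Fin n → ℝ))
      (xstar : Fin n → ℝ), xstar ∈ 𝔛 →
      ((∀ x ∈ 𝔛, cdf (gaussianReal (μ xstar) ((s xstar).toNNReal ^ 2)) τ ≤
          cdf (gaussianReal (μ x) ((s x).toNNReal ^ 2)) τ) ↔
        (∀ x ∈ 𝔛, (τ - μ xstar) / s xstar ≤ (τ - μ x) / s x)) := by
  have hstd := strictMono_cdf_gaussianReal 0 one_ne_zero
  refine ⟨hstd, fun μ s hs τ 𝔛 xstar _ => ?_⟩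
  simp only [cdf_gaussianReal_eq_cdf_zero_one _ _ (hs _)]
  exact forall₂_congr fun _ _ => hstd.le_iff_le
end
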